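/- arXiv:1910.13472 — 3 statements merged into one kernel-verified Lean document; each statement's English description precedes it below -/
import Mathlib

section
/- Fix a baseline configuration with b − M ≥ 1 and b − N ≥ 1. Then every σ ∈ V[M,N] with not all coefficient polynomials a_0,…,a_{r−1} zero produces a codeword (σ(P_{i,j}; t_i)) of Hamming weight at least min{(b−M)(r+1), 2(b−N)}; in particular the minimum distance d of the baseline code satisfies d ≥ min{(b−M)(r+1), 2(b−N)}. -/
/-!
Split the codeword into the `b` blocks `j ↦ σ(P i j; t i)`. If `a = 0`, block `i` is the constant
`a₀(t i)`, which is nonzero for at least `b - M` indices since `a₀` has at most `M` roots. Otherwise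
some `a ℓ` is nonzero at `t i` for at least `b - N` indices, and there block `i` is a nonzero linear
functional evaluated at the vectors `(1, P i j)`; any `r` of these span `F^r`, so the functional
cannot vanish at `r` of them, i.e. the block has weight at least `2`. Finally the codewords are the
image of `V[M,N]` under a linear map, so taking their span adds nothing.
-/

open Polynomial Finset

theorem card_sub_le_hammingNorm_eval {R ι : Type*} [CommRing R] [IsDomain R]
    [DecidableEq R] [Fintype ι] {t : ι → R} (ht : Function.Injective t) {p : R[X]}
    (hp : p ≠ 0) {n : ℕ} (hdeg : p.degree ≤ n) :
    Fintype.card ι - n ≤ hammingNorm fun i => p.eval (t i) := by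
  have hzeros : #{i | p.eval (t i) = 0} ≤ n := by
    rw [← card_image_of_injective _ ht]
    refine (card_le_degree_of_subset_roots fun x hx => ?_).trans (natDegree_le_of_degree_le hdeg)
    obtain ⟨i, hi, rfl⟩ := mem_image.mp hx
    exact (mem_roots hp).mpr (mem_filter.mp hi).2
  have := card_filter_add_card_filter_not (s := (univ : Finset ι)) fun i => p.eval (t i) = 0
  rw [card_univ] at this
  simp only [hammingNorm, ne_eq]
  omega

theorem hammingNorm_prod_eq_sum {ι κ β : Type*} [Fintype ι] [Fintype κ] [Zero β]
    [DecidableEq β] (w : ι × κ → β) :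
    hammingNorm w = ∑ i, hammingNorm fun j => w (i, j) := by
  simp only [hammingNorm, card_filter, Fintype.sum_prod_type]

theorem hammingNorm_mul_le_hammingNorm_prod {ι κ β γ : Type*} [Fintype ι] [Fintype κ]
    [Zero β] [DecidableEq β] [Zero γ] [DecidableEq γ] {w : ι × κ → β} (u : ι → γ) {k : ℕ}
    (h : ∀ i, u i ≠ 0 → k ≤ hammingNorm fun j => w (i, j)) :
    hammingNorm u * k ≤ hammingNorm w := by
  rw [hammingNorm_prod_eq_sum, hammingNorm, ← smul_eq_mul]
  exact (card_nsmul_le_sum _ _ _ fun i hi => h i (mem_filter.mp hi).2).trans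
    (sum_le_sum_of_subset (subset_univ _))

theorem two_le_hammingNorm_of_linearIndependent_compl {K V ι : Type*} [Field K]
    [DecidableEq K] [AddCommGroup V] [Module K V] [FiniteDimensional K V] [Fintype ι]
    [DecidableEq ι] {v : ι → V}
    (hcard : Fintype.card ι = Module.finrank K V + 1)
    (hv : ∀ j, LinearIndependent K fun j' : {j' // j' ≠ j} => v j'.1)
    {φ : Module.Dual K V} (hφ : φ ≠ 0) : 2 ≤ hammingNorm fun j => φ (v j) := by
  by_contra! hlt
  have : Nonempty ι := Fintype.card_pos_iff.mp (by omega)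
  obtain ⟨j, hj⟩ := card_le_one_iff_subset_singleton.mp (Nat.le_of_lt_succ hlt)
  have hspan : Submodule.span K (Set.range fun j' : {j' // j' ≠ j} => v j'.1) = ⊤ :=
    (hv j).span_eq_top_of_card_eq_finrank' (by rw [Fintype.card_subtype_compl]; simp [hcard])
  refine hφ (LinearMap.ext_on_range hspan fun j' => ?_)
  by_contra hne
  exact j'.2 (mem_singleton.mp (hj (mem_filter.mpr ⟨mem_univ _, hne⟩)))

theorem two_le_hammingNorm_affine {F κ Λ : Type*} [Field F] [DecidableEq F] [Fintype κ]
    [DecidableEq κ] [Fintype Λ] (hcard : Fintype.card κ = Fintype.card Λ + 2)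
    {Q : κ → Λ → F} (hQ : ∀ j, LinearIndependent F fun j' : {j' // j' ≠ j} => ((1 : F), Q j'.1))
    (c₀ : F) {c : Λ → F} (hc : c ≠ 0) : 2 ≤ hammingNorm fun j => c₀ + ∑ ℓ, c ℓ * Q j ℓ := by
  classical
  obtain ⟨ℓ, hℓ⟩ := Function.ne_iff.mp hc
  let φ : Module.Dual F (F × (Λ → F)) := (LinearMap.lsmul F F c₀).coprod (dotProductBilin F F c)
  have hφ : φ ≠ 0 := fun h => hℓ <| by
    simpa [φ] using LinearMap.congr_fun h (0, Pi.single ℓ 1)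
  have hdim : Fintype.card κ = Module.finrank F (F × (Λ → F)) + 1 := by
    rw [hcard, Module.finrank_prod, Module.finrank_self, Module.finrank_fintype_fun_eq_card]; ring
  simpa [φ, dotProduct] using
    two_le_hammingNorm_of_linearIndependent_compl (v := fun j => ((1 : F), Q j)) hdim hQ hφ

theorem min_le_hammingNorm_baseline {F : Type*} [Field F] [DecidableEq F] {r b M N : ℕ}
    {t : Fin b → F} (ht : Function.Injective t) {P : Fin b → Fin (r + 1) → Fin (r - 1) → F}
    (hP : ∀ i j, LinearIndependent F
      fun j' : {j' : Fin (r + 1) // j' ≠ j} => ((1 : F), P i j'.1))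
    {a₀ : F[X]} {a : Fin (r - 1) → F[X]} (h₀ : a₀.degree ≤ M) (ha : ∀ ℓ, (a ℓ).degree ≤ N)
    (hne : ¬(a₀ = 0 ∧ a = 0)) :
    min ((b - M) * (r + 1)) (2 * (b - N)) ≤
      hammingNorm fun p : Fin b × Fin (r + 1) =>
        a₀.eval (t p.1) + ∑ ℓ, (a ℓ).eval (t p.1) * P p.1 p.2 ℓ := by
  by_cases ha0 : a = 0
  · subst ha0
    have hroots := card_sub_le_hammingNorm_eval ht (fun h => hne ⟨h, rfl⟩) h₀
    rw [Fintype.card_fin] at hroots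
    refine (min_le_left _ _).trans <| (Nat.mul_le_mul_right _ hroots).trans <|
      hammingNorm_mul_le_hammingNorm_prod _ fun i hi => ?_
    simp [hammingNorm, hi]
  · obtain ⟨ℓ, hℓ⟩ := Function.ne_iff.mp ha0
    have hr : 2 ≤ r := by have := ℓ.2; omega
    have hroots := card_sub_le_hammingNorm_eval ht hℓ (ha ℓ)
    rw [Fintype.card_fin] at hroots
    calc min ((b - M) * (r + 1)) (2 * (b - N)) ≤ (b - N) * 2 := by omega
      _ ≤ _ := (Nat.mul_le_mul_right _ hroots).trans <|
        hammingNorm_mul_le_hammingNorm_prod _ fun i hi =>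
          two_le_hammingNorm_affine (Q := P i) (c := fun l => (a l).eval (t i))
            (by simp only [Fintype.card_fin]; omega) (hP i) (a₀.eval (t i))
            fun h => hi (congrFun h ℓ)

section BaselineCode

variable {F ι κ Λ : Type*} [Field F]

noncomputable def baselineEval [Fintype Λ] (t : ι → F) (P : ι → κ → Λ → F) :
    F[X] × (Λ → F[X]) →ₗ[F] (ι × κ → F) where
  toFun σ p := σ.1.eval (t p.1) + ∑ ℓ, (σ.2 ℓ).eval (t p.1) * P p.1 p.2 ℓ
  map_add' σ τ := by
    ext p
    simp only [Prod.fst_add, Prod.snd_add, Pi.add_apply, eval_add, add_mul, sum_add_distrib]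
    ring
  map_smul' c σ := by
    ext p
    simp [mul_add, mul_sum, mul_assoc]

variable (F Λ) in
/-- The space `V[M,N]`, an element `σ` being recorded by its coefficient polynomials `(a₀, a)`. -/
noncomputable def degreeLESpace (M N : ℕ) : Submodule F (F[X] × (Λ → F[X])) :=
  (degreeLE F M).prod (Submodule.pi Set.univ fun _ => degreeLE F N)

theorem span_codewords_le_map_baselineEval [Fintype Λ] (t : ι → F) (P : ι → κ → Λ → F)
    (M N : ℕ) :
    Submodule.span F {w : ι × κ → F | ∃ (a₀ : F[X]) (a : Λ → F[X]),
        a₀.degree ≤ M ∧ (∀ ℓ, (a ℓ).degree ≤ N) ∧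
        w = fun p => a₀.eval (t p.1) + ∑ ℓ, (a ℓ).eval (t p.1) * P p.1 p.2 ℓ} ≤
      (degreeLESpace F Λ M N).map (baselineEval t P) := by
  rw [Submodule.span_le]
  rintro _ ⟨a₀, a, h₀, ha, rfl⟩
  exact ⟨(a₀, a), ⟨mem_degreeLE.mpr h₀, fun ℓ _ => mem_degreeLE.mpr (ha ℓ)⟩, rfl⟩

end BaselineCode

theorem stmt_3_general (F : Type) [Field F] [DecidableEq F]
    (r b M N : ℕ)
    (t : Fin b → F) (ht : Function.Injective t)
    (P : Fin b → Fin (r + 1) → (Fin (r - 1) → F))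
    -- no r of the r+1 points in each fiber lie on an affine hyperplane
    (hP : ∀ (i : Fin b) (j : Fin (r + 1)), LinearIndependent F
      (fun j' : {j' : Fin (r + 1) // j' ≠ j} =>
        (((1 : F), P i j') : F × (Fin (r - 1) → F)))) :
    -- weight of the codeword of any nonzero σ ∈ V[M,N]
    (∀ (a₀ : Polynomial F) (a : Fin (r - 1) → Polynomial F),
      a₀.degree ≤ (M : ℕ) → (∀ ℓ, (a ℓ).degree ≤ (N : ℕ)) →
      ¬ (a₀ = 0 ∧ a = 0) →
      min ((b - M) * (r + 1)) (2 * (b - N)) ≤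
        hammingNorm (fun p : Fin b × Fin (r + 1) =>
          a₀.eval (t p.1) + ∑ ℓ : Fin (r - 1), (a ℓ).eval (t p.1) * P p.1 p.2 ℓ)) ∧
    -- in particular, the minimum distance of the baseline code is at least this bound
    (∀ w ∈ Submodule.span F
      {w : Fin b × Fin (r + 1) → F |
        ∃ (a₀ : Polynomial F) (a : Fin (r - 1) → Polynomial F),
          a₀.degree ≤ (M : ℕ) ∧ (∀ ℓ, (a ℓ).degree ≤ (N : ℕ)) ∧
          w = fun p => a₀.eval (t p.1)
            + ∑ ℓ : Fin (r - 1), (a ℓ).eval (t p.1) * P p.1 p.2 ℓ},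
      w ≠ 0 → min ((b - M) * (r + 1)) (2 * (b - N)) ≤ hammingNorm w) := by
  refine ⟨fun a₀ a h₀ ha hne => min_le_hammingNorm_baseline ht hP h₀ ha hne, fun w hw hw0 => ?_⟩
  obtain ⟨⟨a₀, a⟩, ⟨h₀, ha⟩, rfl⟩ := span_codewords_le_map_baselineEval t P M N hw
  refine min_le_hammingNorm_baseline ht hP (mem_degreeLE.mp h₀)
    (fun ℓ => mem_degreeLE.mp (ha ℓ trivial)) ?_
  rintro ⟨rfl, rfl⟩
  exact hw0 (map_zero _)

/-- for a baseline configuration with `b - M ≥ 1` and `b - N ≥ 1`, every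
`σ ∈ V[M,N]` with not all coefficient polynomials zero produces a codeword of Hamming
weight at least `min ((b-M)(r+1)) (2(b-N))`; in particular the minimum distance of the
baseline code is at least this quantity. -/
theorem stmt_3 (F : Type) [Field F] [Fintype F] [DecidableEq F]
    (r b M N : ℕ) (hr : 2 ≤ r) (hb : 1 ≤ b)
    (hM : M + 1 ≤ b) (hN : N + 1 ≤ b)
    (t : Fin b → F) (ht : Function.Injective t)
    (P : Fin b → Fin (r + 1) → (Fin (r - 1) → F))
    -- no r of the r+1 points in each fiber lie on an affine hyperplane
    (hP : ∀ (i : Fin b) (j : Fin (r + 1)), LinearIndependent F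
      (fun j' : {j' : Fin (r + 1) // j' ≠ j} =>
        (((1 : F), P i j') : F × (Fin (r - 1) → F)))) :
    -- weight of the codeword of any nonzero σ ∈ V[M,N]
    (∀ (a₀ : Polynomial F) (a : Fin (r - 1) → Polynomial F),
      a₀.degree ≤ (M : ℕ) → (∀ ℓ, (a ℓ).degree ≤ (N : ℕ)) →
      ¬ (a₀ = 0 ∧ a = 0) →
      min ((b - M) * (r + 1)) (2 * (b - N)) ≤
        hammingNorm (fun p : Fin b × Fin (r + 1) =>
          a₀.eval (t p.1) + ∑ ℓ : Fin (r - 1), (a ℓ).eval (t p.1) * P p.1 p.2 ℓ)) ∧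
    -- in particular, the minimum distance of the baseline code is at least this bound
    (∀ w ∈ Submodule.span F
      {w : Fin b × Fin (r + 1) → F |
        ∃ (a₀ : Polynomial F) (a : Fin (r - 1) → Polynomial F),
          a₀.degree ≤ (M : ℕ) ∧ (∀ ℓ, (a ℓ).degree ≤ (N : ℕ)) ∧
          w = fun p => a₀.eval (t p.1)
            + ∑ ℓ : Fin (r - 1), (a ℓ).eval (t p.1) * P p.1 p.2 ℓ},
      w ≠ 0 → min ((b - M) * (r + 1)) (2 * (b - N)) ≤ hammingNorm w) :=
  stmt_3_general F r b M N t ht P hP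
end

section
/- Assume the refined P¹×P¹ setup, with additionally α < r+1 and 𝔡 ≥ 1 (i.e., N(r+1) < n). Then the evaluation map V → F_q^n, σ ↦ (σ(x_{i,j}, t_i))_{1≤i≤b, 1≤j≤r+1}, is injective, and dim_{F_q} V = r(N+1) + 2α − (α+1)(r+1)/2; consequently the evaluation code C has dimension k = r(N+1) + 2α − (α+1)(r+1)/2. -/
/-!
On the fibre over `t_i`, `σ(·, t_i)` has degree `< r` in `x` but vanishes at the `r + 1`
distinct points `x_{i,j}`, so every coefficient `a_ℓ(t_i)` vanishes (Vandermonde). Each `a_ℓ`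
has degree `≤ N < b` and the `b` distinct roots `t_i`, hence `σ = 0`. So the evaluation code
has dimension `dim V = ∑ ℓ (N - ε_ℓ + 1)`. Writing `r + 1 = α m`, one has `ε_i = ⌈i/m⌉`, and
summing over the `α` blocks of `m` consecutive indices gives `2 ∑ ε_i + 4α = (α + 1)(r + 1)`;
here `α < r + 1` forces `m ≥ 2`, so the omitted index `i = r` contributes exactly `α`.
-/

open Finset Polynomial Function

lemma sum_range_add_pred_div (m : ℕ) : ∑ i ∈ range m, (i + (m - 1)) / m = m - 1 := by
  rcases m with _ | m
  · simp
  rw [sum_range_succ', Nat.add_sub_cancel, zero_add, Nat.div_eq_of_lt (Nat.lt_succ_self m),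
    add_zero]
  have h : ∀ i ∈ range m, (i + 1 + m) / (m + 1) = 1 := fun i hi =>
    Nat.div_eq_of_lt_le (by omega) (by simp at hi; omega)
  simp [sum_congr rfl h]

lemma two_mul_sum_range_mul_add_pred_div (m c : ℕ) (hm : 0 < m) :
    2 * ∑ i ∈ range (m * c), (i + (m - 1)) / m + 2 * c = m * c * (c + 1) := by
  induction c with
  | zero => simp
  | succ c ih =>
    have block : ∑ i ∈ range m, (m * c + i + (m - 1)) / m = m * c + (m - 1) := by
      have h : ∀ i ∈ range m, (m * c + i + (m - 1)) / m = c + (i + (m - 1)) / m := fun i _ => by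
        rw [add_assoc, Nat.mul_add_div hm]
      rw [sum_congr rfl h, sum_add_distrib, sum_const, card_range, smul_eq_mul,
        sum_range_add_pred_div]
    rw [mul_add, mul_one, sum_range_add, block]
    obtain ⟨m, rfl⟩ := Nat.exists_eq_add_one_of_ne_zero hm.ne'
    rw [Nat.add_sub_cancel] at ih ⊢
    linarith

lemma mul_add_pred_div_mul (α i m : ℕ) (hα : 0 < α) (hm : 0 < m) :
    (α * i + (α * m - 1)) / (α * m) = (i + (m - 1)) / m := by
  rw [← Nat.div_div_eq_div_mul]
  congr 1
  obtain ⟨α, rfl⟩ := Nat.exists_eq_add_one_of_ne_zero hα.ne'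
  obtain ⟨m, rfl⟩ := Nat.exists_eq_add_one_of_ne_zero hm.ne'
  refine Nat.div_eq_of_lt_le ?_ ?_ <;>
  · simp only [Nat.add_sub_cancel]
    ring_nf
    omega

lemma two_mul_sum_ceil_mul_div (r α m : ℕ) (hα : 0 < α) (hm : 2 ≤ m) (hr : r + 1 = α * m) :
    2 * ∑ i ∈ range r, (α * i + r) / (r + 1) + 4 * α = (α + 1) * (r + 1) := by
  have hr' : r = α * m - 1 := by omega
  have hceil : ∀ i, (α * i + r) / (r + 1) = (i + (m - 1)) / m := fun i => by
    rw [hr, hr', mul_add_pred_div_mul α i m hα (by omega)]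
  have hlast : (r + (m - 1)) / m = α := by
    rw [show r + (m - 1) = m * α + (m - 2) by rw [mul_comm m α]; omega,
      Nat.mul_add_div (by omega), Nat.div_eq_of_lt (by omega), add_zero]
  have hsum := two_mul_sum_range_mul_add_pred_div m α (by omega)
  rw [← mul_comm α m, ← hr, sum_range_succ, hlast] at hsum
  simp only [hceil]
  linarith

lemma sum_sub_ceil_mul_div_add_one (r α N : ℕ) (hα : 1 ≤ α) (hdvd : α ∣ r + 1)
    (hαlt : α < r + 1) (hN : (α * (r - 1) + r) / (r + 1) ≤ N) :
    ((∑ ℓ : Fin r, (N - (α * (ℓ : ℕ) + r) / (r + 1) + 1) : ℕ) : ℤ)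
      = r * (N + 1) + 2 * α - (α + 1) * (r + 1) / 2 := by
  obtain ⟨m, hm⟩ := hdvd
  have hm2 : 2 ≤ m := by
    by_contra! h
    interval_cases m <;> omega
  have hεN : ∀ i ∈ range r, (α * i + r) / (r + 1) ≤ N := fun i hi =>
    (Nat.div_le_div_right (by gcongr; simp at hi; omega)).trans hN
  have hsplit : ∑ i ∈ range r, (N - (α * i + r) / (r + 1) + 1)
      + ∑ i ∈ range r, (α * i + r) / (r + 1) = r * (N + 1) := by
    rw [← sum_add_distrib, sum_congr rfl fun i hi => (by have := hεN i hi; omega :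
      N - (α * i + r) / (r + 1) + 1 + (α * i + r) / (r + 1) = N + 1)]
    simp
  have hceil : ((α : ℤ) + 1) * (r + 1)
      = 2 * (∑ i ∈ range r, (α * i + r) / (r + 1) + 2 * α : ℕ) := by
    have := congrArg (Nat.cast : ℕ → ℤ) (two_mul_sum_ceil_mul_div r α m hα hm2 hm)
    push_cast at this ⊢
    linarith
  rw [Fin.sum_univ_eq_sum_range (fun i => N - (α * i + r) / (r + 1) + 1), hceil,
    Int.mul_ediv_cancel_left _ two_ne_zero]
  have := congrArg (Nat.cast : ℕ → ℤ) hsplit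
  push_cast at this ⊢
  linarith

variable {F ι κ : Type*} [Field F] {r : ℕ}

def fibreEval (t : ι → F) (x : ι → κ → F) : (Fin r → F[X]) →ₗ[F] (ι × κ → F) where
  toFun a p := ∑ ℓ : Fin r, (a ℓ).eval (t p.1) * x p.1 p.2 ^ (ℓ : ℕ)
  map_add' a b := by ext p; simp [add_mul, sum_add_distrib]
  map_smul' c a := by ext p; simp [mul_sum, mul_assoc]

lemma eval_eq_zero_of_fibreEval_eq_zero [Fintype κ] {t : ι → F} {x : ι → κ → F}
    (hx : ∀ i, Injective (x i)) (hr : r ≤ Fintype.card κ) {a : Fin r → F[X]}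
    (ha : fibreEval t x a = 0) (i : ι) (ℓ : Fin r) : (a ℓ).eval (t i) = 0 := by
  obtain ⟨e⟩ : Nonempty (Fin r ↪ κ) :=
    Function.Embedding.nonempty_of_card_le (by rwa [Fintype.card_fin])
  have := Matrix.eq_zero_of_forall_index_sum_mul_pow_eq_zero (v := fun ℓ => (a ℓ).eval (t i))
    ((hx i).comp e.injective) fun j => congrFun ha (i, e j)
  exact congrFun this ℓ

lemma eq_zero_of_fibreEval_eq_zero [Fintype ι] [Fintype κ] {t : ι → F} {x : ι → κ → F}
    (ht : Injective t) (hx : ∀ i, Injective (x i)) (hr : r ≤ Fintype.card κ)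
    {a : Fin r → F[X]} (hdeg : ∀ ℓ, (a ℓ).natDegree < Fintype.card ι)
    (ha : fibreEval t x a = 0) : a = 0 :=
  funext fun ℓ => eq_zero_of_natDegree_lt_card_of_eval_eq_zero _ ht
    (eval_eq_zero_of_fibreEval_eq_zero hx hr ha · ℓ) (hdeg ℓ)

noncomputable def boundedFibreEval (d : Fin r → ℕ) (t : ι → F) (x : ι → κ → F) :
    (Π ℓ : Fin r, degreeLE F (d ℓ)) →ₗ[F] (ι × κ → F) :=
  fibreEval t x ∘ₗ LinearMap.pi fun ℓ => (degreeLE F (d ℓ)).subtype ∘ₗ LinearMap.proj ℓ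

lemma finrank_degreeLE (n : ℕ) : Module.finrank F (degreeLE F n) = n + 1 := by
  rw [← degreeLT_succ_eq_degreeLE, (degreeLTEquiv F (n + 1)).finrank_eq, Module.finrank_fin_fun]

lemma boundedFibreEval_injective [Fintype ι] [Fintype κ] {d : Fin r → ℕ} {t : ι → F}
    {x : ι → κ → F} (ht : Injective t) (hx : ∀ i, Injective (x i))
    (hr : r ≤ Fintype.card κ) (hd : ∀ ℓ, d ℓ < Fintype.card ι) :
    Injective (boundedFibreEval d t x) := by
  refine (injective_iff_map_eq_zero _).2 fun v hv => funext fun ℓ => Subtype.ext ?_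
  have hdeg (ℓ : Fin r) : (v ℓ : F[X]).natDegree < Fintype.card ι :=
    (natDegree_le_of_degree_le (mem_degreeLE.1 (v ℓ).2)).trans_lt (hd ℓ)
  exact congrFun (eq_zero_of_fibreEval_eq_zero ht hx hr hdeg hv) ℓ

lemma finrank_range_boundedFibreEval [Fintype ι] [Fintype κ] {d : Fin r → ℕ} {t : ι → F}
    {x : ι → κ → F} (ht : Injective t) (hx : ∀ i, Injective (x i))
    (hr : r ≤ Fintype.card κ) (hd : ∀ ℓ, d ℓ < Fintype.card ι) :
    Module.finrank F (LinearMap.range (boundedFibreEval d t x)) = ∑ ℓ, (d ℓ + 1) := by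
  have (ℓ : Fin r) : Module.Finite F (degreeLE F (d ℓ)) :=
    Module.finite_of_finrank_eq_succ (finrank_degreeLE _)
  rw [LinearMap.finrank_range_of_inj (boundedFibreEval_injective ht hx hr hd),
    Module.finrank_pi_fintype]
  simp only [finrank_degreeLE]

lemma coe_range_boundedFibreEval (d : Fin r → ℕ) (t : ι → F) (x : ι → κ → F) :
    (LinearMap.range (boundedFibreEval d t x) : Set (ι × κ → F))
      = {w | ∃ a : Fin r → F[X], (∀ ℓ, (a ℓ).degree ≤ (d ℓ : WithBot ℕ)) ∧
          w = fun p => ∑ ℓ : Fin r, (a ℓ).eval (t p.1) * x p.1 p.2 ^ (ℓ : ℕ)} := by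
  ext w
  constructor
  · rintro ⟨v, rfl⟩
    exact ⟨fun ℓ => v ℓ, fun ℓ => mem_degreeLE.1 (v ℓ).2, rfl⟩
  · rintro ⟨a, ha, rfl⟩
    exact ⟨fun ℓ => ⟨a ℓ, mem_degreeLE.2 (ha ℓ)⟩, rfl⟩

theorem stmt_12_general (F : Type) [Field F]
    (r α b N : ℕ) (hα : 1 ≤ α)
    (hdvd : α ∣ (r + 1)) (hαlt : α < r + 1)
    -- N ≥ ⌈α(r-1)/(r+1)⌉
    (hN : (α * (r - 1) + r) / (r + 1) ≤ N)
    -- 𝔡 = n - N(r+1) ≥ 1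
    (hNb : N < b)
    (t : Fin b → F) (ht : Function.Injective t)
    (x : Fin b → Fin (r + 1) → F)
    (hxinj : ∀ i, Function.Injective (x i)) :
    -- the evaluation map on V is injective
    (∀ a a' : Fin r → Polynomial F,
      (∀ i : Fin r,
        (a i).degree ≤ ((N - (α * (i : ℕ) + r) / (r + 1) : ℕ) : WithBot ℕ)) →
      (∀ i : Fin r,
        (a' i).degree ≤ ((N - (α * (i : ℕ) + r) / (r + 1) : ℕ) : WithBot ℕ)) →
      (∀ (i : Fin b) (j : Fin (r + 1)),
        ∑ ℓ : Fin r, (a ℓ).eval (t i) * (x i j) ^ (ℓ : ℕ)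
          = ∑ ℓ : Fin r, (a' ℓ).eval (t i) * (x i j) ^ (ℓ : ℕ)) →
      a = a') ∧
    -- dimension of the evaluation code: k = r(N+1) + 2α - (α+1)(r+1)/2
    ((Module.finrank F (Submodule.span F
      {w : Fin b × Fin (r + 1) → F |
        ∃ a : Fin r → Polynomial F,
          (∀ i : Fin r,
            (a i).degree ≤ ((N - (α * (i : ℕ) + r) / (r + 1) : ℕ) : WithBot ℕ)) ∧
          w = fun p => ∑ ℓ : Fin r, (a ℓ).eval (t p.1) * (x p.1 p.2) ^ (ℓ : ℕ)}) : ℤ)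
      = (r : ℤ) * ((N : ℤ) + 1) + 2 * (α : ℤ)
        - ((α : ℤ) + 1) * ((r : ℤ) + 1) / 2) := by
  set d : Fin r → ℕ := fun ℓ => N - (α * (ℓ : ℕ) + r) / (r + 1)
  have hd : ∀ ℓ, d ℓ < Fintype.card (Fin b) := fun ℓ =>
    (Nat.sub_le _ _).trans_lt (by rwa [Fintype.card_fin])
  have hcard : r ≤ Fintype.card (Fin (r + 1)) := by simp
  refine ⟨fun a a' ha ha' heval => funext fun ℓ => ?_, ?_⟩
  · have := boundedFibreEval_injective ht hxinj hcard hd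
      (a₁ := fun ℓ => ⟨a ℓ, mem_degreeLE.2 (ha ℓ)⟩) (a₂ := fun ℓ => ⟨a' ℓ, mem_degreeLE.2 (ha' ℓ)⟩)
      (funext fun p => heval p.1 p.2)
    exact congrArg Subtype.val (congrFun this ℓ)
  · rw [← coe_range_boundedFibreEval d, Submodule.span_eq,
      finrank_range_boundedFibreEval ht hxinj hcard hd]
    exact sum_sub_ceil_mul_div_add_one r α N hα hdvd hαlt hN

/-- refined `ℙ¹×ℙ¹` setup with `α < r+1` and `𝔡 ≥ 1` (i.e. `N < b`).
The evaluation map `V → F_q^n` is injective and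
`dim V = k = r(N+1) + 2α - (α+1)(r+1)/2`, which is then the dimension of the
evaluation code.

Here the ceiling `⌈αi/(r+1)⌉` is written as the natural-number division
`(α*i + r)/(r+1)`, which is exactly the ceiling of `αi/(r+1)`. -/
theorem stmt_12 (F : Type) [Field F] [Fintype F] [DecidableEq F]
    (r α b N : ℕ) (hr : 2 ≤ r) (hα : 1 ≤ α) (hb : 1 ≤ b)
    (hdvd : α ∣ (r + 1)) (hαlt : α < r + 1)
    -- N ≥ ⌈α(r-1)/(r+1)⌉
    (hN : (α * (r - 1) + r) / (r + 1) ≤ N)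
    -- 𝔡 = n - N(r+1) ≥ 1
    (hNb : N < b)
    -- x^{r+1} - t^α - 1 is irreducible in F_q[x,t] = (F_q[t])[x]
    (hirr : Irreducible (Polynomial.X ^ (r + 1)
        - Polynomial.C (Polynomial.X ^ α + 1) : Polynomial (Polynomial F)))
    (t : Fin b → F) (ht : Function.Injective t)
    (x : Fin b → Fin (r + 1) → F)
    -- the fiber over t_i consists of the r+1 distinct points x_{i,1}, …, x_{i,r+1}
    (hcurve : ∀ i j, (x i j) ^ (r + 1) = (t i) ^ α + 1)
    (hxinj : ∀ i, Function.Injective (x i)) :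
    -- the evaluation map on V is injective
    (∀ a a' : Fin r → Polynomial F,
      (∀ i : Fin r,
        (a i).degree ≤ ((N - (α * (i : ℕ) + r) / (r + 1) : ℕ) : WithBot ℕ)) →
      (∀ i : Fin r,
        (a' i).degree ≤ ((N - (α * (i : ℕ) + r) / (r + 1) : ℕ) : WithBot ℕ)) →
      (∀ (i : Fin b) (j : Fin (r + 1)),
        ∑ ℓ : Fin r, (a ℓ).eval (t i) * (x i j) ^ (ℓ : ℕ)
          = ∑ ℓ : Fin r, (a' ℓ).eval (t i) * (x i j) ^ (ℓ : ℕ)) →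
      a = a') ∧
    -- dimension of the evaluation code: k = r(N+1) + 2α - (α+1)(r+1)/2
    ((Module.finrank F (Submodule.span F
      {w : Fin b × Fin (r + 1) → F |
        ∃ a : Fin r → Polynomial F,
          (∀ i : Fin r,
            (a i).degree ≤ ((N - (α * (i : ℕ) + r) / (r + 1) : ℕ) : WithBot ℕ)) ∧
          w = fun p => ∑ ℓ : Fin r, (a ℓ).eval (t p.1) * (x p.1 p.2) ^ (ℓ : ℕ)}) : ℤ)
      = (r : ℤ) * ((N : ℤ) + 1) + 2 * (α : ℤ)
        - ((α : ℤ) + 1) * ((r : ℤ) + 1) / 2) :=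
  stmt_12_general F r α b N hα hdvd hαlt hN hNb t ht x hxinj
end

section
/- Let F_q be a finite field, r ≥ 2 and α ≥ 1 integers, and g ∈ F_q[x,t] an irreducible polynomial with deg_x g = r+1 and deg_t g ≤ α. Let t_1,…,t_b ∈ F_q be distinct elements such that for each i the polynomial g(x, t_i) ∈ F_q[x] has r+1 distinct roots x_{i,1},…,x_{i,r+1} in F_q, and set n = b(r+1). Let N ≥ 0 and let a_0,…,a_{r−1} ∈ F_q[t] be polynomials of degree at most N, not all zero. Then the number of pairs (i,j), 1 ≤ i ≤ b, 1 ≤ j ≤ r+1, with Σ_{ℓ=0}^{r−1} a_ℓ(t_i) x_{i,j}^ℓ = 0 is at most N(r+1) + α(r−1). Consequently, setting 𝔡 = n − N(r+1), the evaluation code obtained by evaluating all such polynomial tuples at the points (x_{i,j}, t_i) has minimum distance at least 𝔡 − α(r−1). -/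
/-!
Write `Σ_ℓ a_ℓ(t) x^ℓ` as `f ∈ F[t][x]`, of `x`-degree at most `r - 1`, and let
`R(t) = Res_x(g, f)`. Since `g` is irreducible of larger `x`-degree, it is coprime to `f` over
`F(t)` (Gauss's lemma), so `R ≠ 0`; expanding the Sylvester determinant column by column gives
`deg R ≤ (r + 1) N + (r - 1) α`. If `f(·, t_i)` vanishes at `m_i` of the roots of `g(·, t_i)`,
these `m_i` common roots produce an `m_i`-dimensional kernel of the Sylvester matrix at `t = t_i`,
so `(t - t_i)^{m_i}` divides `R`. As the `t_i` are distinct, `Σ m_i ≤ deg R`.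
-/

open Polynomial Module

namespace Matrix

theorem pow_card_dvd_det_of_dvd_cols {ι R : Type*} [Fintype ι] [DecidableEq ι] [CommRing R]
    (M : Matrix ι ι R) (p : R) (J : Finset ι) (h : ∀ i, ∀ j ∈ J, p ∣ M i j) :
    p ^ J.card ∣ M.det := by
  choose N hN using h
  let N' : Matrix ι ι R := of fun i j => if hj : j ∈ J then N i j hj else M i j
  have hM : M = N' * diagonal fun j => if j ∈ J then p else 1 := by
    ext i j
    by_cases hj : j ∈ J
    · simp [N', hj, hN i j hj, mul_comm]
    · simp [N', hj]
  rw [hM, det_mul, det_diagonal, Finset.prod_ite_mem, Finset.univ_inter, Finset.prod_const]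
  exact dvd_mul_left _ _

theorem X_sub_C_pow_dvd_det_of_rank_add_le {ι K : Type*} [Fintype ι] [DecidableEq ι] [Field K]
    (M : Matrix ι ι K[X]) (c : K) {k : ℕ} (hk : (M.map (eval c)).rank + k ≤ Fintype.card ι) :
    (X - C c) ^ k ∣ M.det := by
  let W := LinearMap.ker (M.map (eval c)).mulVecLin
  obtain ⟨W', hW⟩ := W.exists_isCompl
  -- The columns of `P` form a basis of `K^ι` containing a basis of `W`: after the change of
  -- basis `M * P`, at least `dim W ≥ k` columns vanish at `c`.
  let b := ((finBasis K W).prod (finBasis K W')).map (W.prodEquivOfIsCompl W' hW)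
  let σ : ι ≃ Fin (finrank K W) ⊕ Fin (finrank K W') :=
    Fintype.equivOfCardEq (by rw [← finrank_fintype_fun_eq_card (R := K),
      finrank_eq_card_basis b])
  let P : Matrix ι ι K := (Pi.basisFun K ι).toMatrix (b.reindex σ.symm)
  have hP : IsUnit (P.map C).det := by
    have := (Pi.basisFun K ι).invertibleToMatrix (b.reindex σ.symm)
    rw [← RingHom.mapMatrix_apply, ← RingHom.map_det]
    exact (isUnit_det_of_invertible P).map C
  have hW_dim : k ≤ finrank K W := by
    have := LinearMap.finrank_range_add_finrank_ker (M.map (eval c)).mulVecLin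
    change _ + finrank K W = _ at this
    rw [finrank_fintype_fun_eq_card] at this
    rw [rank] at hk
    omega
  let J : Finset ι := Finset.univ.map (Function.Embedding.inl.trans σ.symm.toEmbedding)
  have hcol : ∀ i, ∀ j ∈ J, X - C c ∣ (M * P.map C) i j := by
    intro i j hj
    obtain ⟨a, -, rfl⟩ := Finset.mem_map.mp hj
    have hb : b (Sum.inl a) ∈ W := by simp [b]
    rw [dvd_iff_isRoot, IsRoot]
    convert congrFun (LinearMap.mem_ker.mp hb) i using 1
    · simp [P, Basis.toMatrix_apply, mul_apply, eval_finsetSum, mulVec, dotProduct]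
    · rfl
  have := (M * P.map C).pow_card_dvd_det_of_dvd_cols _ J hcol
  rw [det_mul, hP.dvd_mul_right] at this
  refine (pow_dvd_pow _ ?_).trans this
  simpa [J] using hW_dim

end Matrix

namespace Polynomial

theorem natDegree_det_le {ι R : Type*} [Fintype ι] [DecidableEq ι] [CommRing R]
    (M : Matrix ι ι R[X]) (d : ι → ℕ) (h : ∀ i j, (M i j).natDegree ≤ d j) :
    M.det.natDegree ≤ ∑ j, d j := by
  rw [Matrix.det_apply]
  refine natDegree_sum_le_of_forall_le _ _ fun σ _ => ?_
  rw [Units.smul_def]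
  exact natDegree_smul_le _ _ |>.trans <| natDegree_prod_le _ _ |>.trans <|
    Finset.sum_le_sum fun i _ => h _ _

theorem natDegree_resultant_le {R : Type*} [CommRing R] (f g : R[X][X]) (m n : ℕ)
    {βf βg : ℕ} (hf : ∀ i, (f.coeff i).natDegree ≤ βf) (hg : ∀ i, (g.coeff i).natDegree ≤ βg) :
    (resultant f g m n).natDegree ≤ m * βg + n * βf := by
  refine (natDegree_det_le _ (Fin.addCases (fun _ => βg) fun _ => βf) fun i j => ?_).trans
    (by simp [Fin.sum_univ_add])
  refine Fin.addCases (fun j => ?_) (fun j => ?_) j <;>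
    simp only [sylvester, Matrix.of_apply, Fin.addCases_left, Fin.addCases_right] <;>
    split_ifs <;> simp [hf, hg]

theorem resultant_ne_zero_of_irreducible {R : Type*} [CommRing R] [IsDomain R]
    [IsGCDMonoid R] {g f : R[X]} (hg : Irreducible g) (hf : f ≠ 0)
    (hfg : f.natDegree < g.natDegree) : resultant g f ≠ 0 := by
  let φ := algebraMap R (FractionRing R)
  have hφ : Function.Injective φ := IsFractionRing.injective R _
  have hgK : Irreducible (g.map φ) :=
    ((hg.isPrimitive (by omega)).irreducible_iff_irreducible_map_fraction_map).mp hg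
  have hfK : f.map φ ≠ 0 := (Polynomial.map_ne_zero_iff hφ).mpr hf
  intro h
  have hres : resultant (g.map φ) (f.map φ) = 0 := by
    rw [natDegree_map_eq_of_injective hφ, natDegree_map_eq_of_injective hφ, resultant_map_map,
      h, map_zero]
  refine (resultant_eq_zero_iff.mp hres).2 (hgK.coprime_iff_not_dvd.mpr fun hdvd => ?_)
  have := natDegree_le_of_dvd hdvd hfK
  rw [natDegree_map_eq_of_injective hφ, natDegree_map_eq_of_injective hφ] at this
  omega

theorem mul_mem_degreeLT_of_natDegree_mul_le {R : Type*} [CommRing R] [IsDomain R]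
    {d e h : R[X]} {m : ℕ} (hd : d ≠ 0) (hh : h ∈ degreeLT R d.natDegree)
    (hde : (d * e).natDegree ≤ m) : e * h ∈ degreeLT R m := by
  rcases eq_or_ne e 0 with rfl | he
  · simp
  rcases eq_or_ne h 0 with rfl | hh0
  · simp
  rw [mem_degreeLT, degree_eq_natDegree hh0, Nat.cast_lt] at hh
  rw [mem_degreeLT, degree_eq_natDegree (mul_ne_zero he hh0), Nat.cast_lt,
    natDegree_mul he hh0]
  rw [natDegree_mul hd he] at hde
  omega

theorem rank_sylvester_add_natDegree_le {K : Type*} [Field K] {f g d : K[X]}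
    {m n : ℕ} (hf0 : f ≠ 0) (hf : f.natDegree ≤ m) (hg : g.natDegree ≤ n) (hdf : d ∣ f)
    (hdg : d ∣ g) : (sylvester f g m n).rank + d.natDegree ≤ m + n := by
  obtain ⟨f', rfl⟩ := hdf
  obtain ⟨g', rfl⟩ := hdg
  have hd : d ≠ 0 := left_ne_zero_of_mul hf0
  have hf' : f' ≠ 0 := right_ne_zero_of_mul hf0
  let S := sylvesterMap _ _ hf hg
  -- `S (p, q) = d f' q + d g' p`, which vanishes on `(-f' h, g' h)`.
  let T : K[X]_(d.natDegree) →ₗ[K] K[X]_m × K[X]_n :=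
    { toFun h := (⟨-(f' * h), neg_mem (mul_mem_degreeLT_of_natDegree_mul_le hd h.2 hf)⟩,
        ⟨g' * h, mul_mem_degreeLT_of_natDegree_mul_le hd h.2 hg⟩)
      map_add' _ _ := by
        ext : 2 <;> simp only [Prod.fst_add, Prod.snd_add, Submodule.coe_add] <;> ring
      map_smul' _ _ := by ext <;> simp }
  have hT : Function.Injective T := by
    rw [← LinearMap.ker_eq_bot, LinearMap.ker_eq_bot']
    intro h hTh
    simpa [T, hf'] using congrArg (fun p => (p.1 : K[X])) hTh
  have hST : S ∘ₗ T = 0 := by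
    ext h : 2
    simp only [S, T, LinearMap.coe_comp, LinearMap.coe_mk, AddHom.coe_mk, Function.comp_apply,
      sylvesterMap_apply_coe, mul_neg, LinearMap.zero_apply, ZeroMemClass.coe_zero]
    ring
  have hker : d.natDegree ≤ finrank K (LinearMap.ker S) := by
    rw [← finrank_eq_card_basis (degreeLT.basis K d.natDegree) |>.trans (Fintype.card_fin _),
      ← LinearMap.finrank_range_of_inj hT]
    exact Submodule.finrank_mono (LinearMap.range_le_ker_iff.mpr hST)
  have hrank := LinearMap.finrank_range_add_finrank_ker S
  rw [finrank_prod, finrank_eq_card_basis (degreeLT.basis K m),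
    finrank_eq_card_basis (degreeLT.basis K n), Fintype.card_fin, Fintype.card_fin] at hrank
  rw [Matrix.rank_eq_finrank_range_toLin _ (degreeLT.basis K (m + n))
    (((degreeLT.basis K m).prod (degreeLT.basis K n)).reindex finSumFinEquiv),
    ← toMatrix_sylvesterMap' _ _ hf hg, Matrix.toLin_toMatrix]
  change finrank K (LinearMap.range S) + _ ≤ _
  omega

theorem X_sub_C_pow_dvd_resultant {K : Type*} [Field K] {f g : K[X][X]} {m n : ℕ}
    {c : K} {d : K[X]} (hf0 : f.map (evalRingHom c) ≠ 0) (hf : f.natDegree ≤ m)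
    (hg : g.natDegree ≤ n) (hdf : d ∣ f.map (evalRingHom c)) (hdg : d ∣ g.map (evalRingHom c)) :
    (X - C c) ^ d.natDegree ∣ resultant f g m n := by
  refine Matrix.X_sub_C_pow_dvd_det_of_rank_add_le _ c ?_
  rw [Fintype.card_fin, ← coe_evalRingHom, ← RingHom.mapMatrix_apply, ← sylvester_map_map]
  exact rank_sylvester_add_natDegree_le hf0 (natDegree_map_le.trans hf)
    (natDegree_map_le.trans hg) hdf hdg

theorem X_sub_C_pow_card_dvd_resultant {K ι : Type*} [Field K] {f g : K[X][X]} {c : K}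
    {s : Finset ι} {y : ι → K} (hy : Set.InjOn y s) (hf0 : f.map (evalRingHom c) ≠ 0)
    (hfy : ∀ j ∈ s, (f.map (evalRingHom c)).eval (y j) = 0)
    (hgy : ∀ j ∈ s, (g.map (evalRingHom c)).eval (y j) = 0) :
    (X - C c) ^ s.card ∣ resultant f g := by
  have hroots (p : K[X]) (hp : ∀ j ∈ s, p.eval (y j) = 0) : ∏ j ∈ s, (X - C (y j)) ∣ p :=
    Finset.prod_dvd_of_coprime (fun i hi j hj hij => isCoprime_X_sub_C_of_isUnit_sub
      (sub_ne_zero_of_ne fun h => hij (hy hi hj h)).isUnit) fun j hj => dvd_iff_isRoot.mpr (hp j hj)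
  simpa using X_sub_C_pow_dvd_resultant hf0 le_rfl le_rfl (hroots _ hfy) (hroots _ hgy)

theorem IsPrimitive.map_evalRingHom_ne_zero {R : Type*} [CommRing R] [Nontrivial R]
    {g : R[X][X]} (hg : g.IsPrimitive) (c : R) : g.map (evalRingHom c) ≠ 0 := by
  intro h
  refine not_isUnit_X_sub_C c (hg _ ((C_dvd_iff_dvd_coeff _ _).mpr fun i => ?_))
  rw [dvd_iff_isRoot, IsRoot, ← coe_evalRingHom, ← coeff_map, h, coeff_zero]

theorem sum_le_natDegree_of_X_sub_C_pow_dvd {K ι : Type*} [Field K] [Fintype ι]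
    {p : K[X]} (hp : p ≠ 0) {t : ι → K} (ht : Function.Injective t) {e : ι → ℕ}
    (h : ∀ i, (X - C (t i)) ^ e i ∣ p) : ∑ i, e i ≤ p.natDegree := by
  have := natDegree_le_of_dvd
    (Fintype.prod_dvd_of_coprime (fun i j hij => (pairwise_coprime_X_sub_C ht hij).pow) h) hp
  rw [natDegree_prod _ _ fun i _ => pow_ne_zero _ (X_sub_C_ne_zero (t i))] at this
  simpa using this

theorem natDegree_sum_fin_C_mul_X_pow_le {R : Type*} [Semiring R] {r : ℕ} (a : Fin r → R) :
    (∑ ℓ : Fin r, C (a ℓ) * X ^ (ℓ : ℕ)).natDegree ≤ r - 1 :=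
  natDegree_sum_le_of_forall_le _ _ fun ℓ _ => natDegree_C_mul_X_pow_le _ _ |>.trans (by omega)

theorem natDegree_coeff_sum_fin_C_mul_X_pow_le {R : Type*} [Semiring R] {r N : ℕ}
    {a : Fin r → R[X]} (ha : ∀ ℓ, (a ℓ).degree ≤ N) (k : ℕ) :
    ((∑ ℓ : Fin r, C (a ℓ) * X ^ (ℓ : ℕ)).coeff k).natDegree ≤ N := by
  simp only [finsetSum_coeff, coeff_C_mul_X_pow]
  refine natDegree_sum_le_of_forall_le _ _ fun ℓ _ => ?_
  split_ifs
  · exact natDegree_le_iff_degree_le.mpr (ha ℓ)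
  · simp

end Polynomial

theorem card_filter_eq_zero_add_hammingNorm {ι β : Type*} [Fintype ι] [Zero β] [DecidableEq β]
    (v : ι → β) : (Finset.univ.filter fun i => v i = 0).card + hammingNorm v = Fintype.card ι :=
  Finset.card_filter_add_card_filter_not _

theorem stmt_13_general (F : Type) [Field F] [DecidableEq F]
    (r α b N : ℕ)
    (g : Polynomial (Polynomial F))
    (hgirr : Irreducible g)
    (hgx : g.natDegree = r + 1)
    (hgt : ∀ i, (g.coeff i).natDegree ≤ α)
    (t : Fin b → F) (ht : Function.Injective t)
    (x : Fin b → Fin (r + 1) → F)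
    (hroot : ∀ i j, (g.map (Polynomial.evalRingHom (t i))).eval (x i j) = 0)
    (hxinj : ∀ i, Function.Injective (x i))
    (a : Fin r → Polynomial F)
    (ha : ∀ ℓ, (a ℓ).degree ≤ (N : ℕ))
    (hne : ¬ ∀ ℓ, a ℓ = 0) :
    (Finset.univ.filter (fun p : Fin b × Fin (r + 1) =>
        ∑ ℓ : Fin r, (a ℓ).eval (t p.1) * (x p.1 p.2) ^ (ℓ : ℕ) = 0)).card
      ≤ N * (r + 1) + α * (r - 1) ∧
    (b * (r + 1) - N * (r + 1)) - α * (r - 1)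
      ≤ hammingNorm (fun p : Fin b × Fin (r + 1) =>
          ∑ ℓ : Fin r, (a ℓ).eval (t p.1) * (x p.1 p.2) ^ (ℓ : ℕ)) := by
  let f : F[X][X] := ∑ ℓ : Fin r, C (a ℓ) * X ^ (ℓ : ℕ)
  have hf_eval (c y : F) :
      (f.map (evalRingHom c)).eval y = ∑ ℓ : Fin r, (a ℓ).eval c * y ^ (ℓ : ℕ) := by
    simp [f, Polynomial.map_sum, eval_finsetSum]
  have hf0 : f ≠ 0 := fun h => hne fun ℓ => by
    simpa [f, Fin.val_inj] using congrArg (coeff · ℓ) h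
  have hf_deg : f.natDegree ≤ r - 1 := natDegree_sum_fin_C_mul_X_pow_le a
  let Z (i : Fin b) := Finset.univ.filter fun j => (f.map (evalRingHom (t i))).eval (x i j) = 0
  have hdvd (i : Fin b) : (X - C (t i)) ^ (Z i).card ∣ resultant g f :=
    X_sub_C_pow_card_dvd_resultant (hxinj i).injOn
      ((hgirr.isPrimitive (by omega)).map_evalRingHom_ne_zero (t i)) (fun j _ => hroot i j)
      fun j hj => (Finset.mem_filter.mp hj).2
  have hcount : ∑ i, (Z i).card ≤ N * (r + 1) + α * (r - 1) :=
    calc ∑ i, (Z i).card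
        ≤ (resultant g f).natDegree := sum_le_natDegree_of_X_sub_C_pow_dvd
          (resultant_ne_zero_of_irreducible hgirr hf0 (by omega)) ht hdvd
      _ ≤ g.natDegree * N + f.natDegree * α := natDegree_resultant_le g f _ _ hgt
        (natDegree_coeff_sum_fin_C_mul_X_pow_le ha)
      _ ≤ N * (r + 1) + α * (r - 1) := by
        rw [hgx, mul_comm _ N, mul_comm _ α]
        exact Nat.add_le_add_left (Nat.mul_le_mul_left α hf_deg) _
  have hzeros : (Finset.univ.filter fun p : Fin b × Fin (r + 1) =>
      (f.map (evalRingHom (t p.1))).eval (x p.1 p.2) = 0).card = ∑ i, (Z i).card := by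
    simp only [Finset.card_filter, Fintype.sum_prod_type, Z]
  have hsplit := card_filter_eq_zero_add_hammingNorm fun p : Fin b × Fin (r + 1) =>
    (f.map (evalRingHom (t p.1))).eval (x p.1 p.2)
  rw [Fintype.card_prod, Fintype.card_fin, Fintype.card_fin] at hsplit
  simp_rw [← hf_eval]
  omega

/-- coarse bound on `ℙ¹×ℙ¹`. Let `g ∈ F_q[x,t] = (F_q[t])[x]` be
irreducible with `deg_x g = r+1` and `deg_t g ≤ α`, let `t_1, …, t_b` be distinct with
`g(x, t_i)` having `r+1` distinct roots `x_{i,1}, …, x_{i,r+1}` in `F_q`, and let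
`a_0, …, a_{r-1}` have degree at most `N`, not all zero. Then the number of pairs
`(i,j)` with `Σ_ℓ a_ℓ(t_i) x_{i,j}^ℓ = 0` is at most `N(r+1) + α(r-1)`, so the
evaluation code has minimum distance at least `𝔡 - α(r-1)` where `𝔡 = n - N(r+1)`,
`n = b(r+1)`. -/
theorem stmt_13 (F : Type) [Field F] [Fintype F] [DecidableEq F]
    (r α b N : ℕ) (hr : 2 ≤ r) (hα : 1 ≤ α) (hb : 1 ≤ b)
    (g : Polynomial (Polynomial F))
    (hgirr : Irreducible g)
    (hgx : g.natDegree = r + 1)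
    (hgt : ∀ i, (g.coeff i).natDegree ≤ α)
    (t : Fin b → F) (ht : Function.Injective t)
    (x : Fin b → Fin (r + 1) → F)
    (hroot : ∀ i j, (g.map (Polynomial.evalRingHom (t i))).eval (x i j) = 0)
    (hxinj : ∀ i, Function.Injective (x i))
    (a : Fin r → Polynomial F)
    (ha : ∀ ℓ, (a ℓ).degree ≤ (N : ℕ))
    (hne : ¬ ∀ ℓ, a ℓ = 0) :
    (Finset.univ.filter (fun p : Fin b × Fin (r + 1) =>
        ∑ ℓ : Fin r, (a ℓ).eval (t p.1) * (x p.1 p.2) ^ (ℓ : ℕ) = 0)).card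
      ≤ N * (r + 1) + α * (r - 1) ∧
    (b * (r + 1) - N * (r + 1)) - α * (r - 1)
      ≤ hammingNorm (fun p : Fin b × Fin (r + 1) =>
          ∑ ℓ : Fin r, (a ℓ).eval (t p.1) * (x p.1 p.2) ^ (ℓ : ℕ)) :=
  stmt_13_general F r α b N g hgirr hgx hgt t ht x hroot hxinj a ha hne
end
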